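/- Let T = ∑_j ω_j (D_j + Σ_t)^{-1}, and suppose ξ solves (I − T Σ_s) ξ = v. If δψ_j solves the correction system (D_j + Σ_t) δψ_j = Σ_s δφ + Σ_s v with δφ = ∑_j ω_j δψ_j and (I − T Σ_s) invertible, then δφ = T Σ_s ξ, and consequently δψ_j satisfies the decoupled equations (D_j + Σ_t) δψ_j = Σ_s ξ for all j. -/
import Mathlib

private lemma sum_mulVec' {n N : ℕ} (A : Fin N → Matrix (Fin n) (Fin n) ℝ)
    (x : Fin n → ℝ) : (∑ j, A j).mulVec x = ∑ j, (A j).mulVec x := by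
  ext i
  simp [Matrix.mulVec, dotProduct, Matrix.sum_apply, Finset.sum_mul]
  rw [Finset.sum_comm]

/-- Reformulation of the ideal kinetic correction equation: the scalar-flux
correction equals T Σ_s ξ and the angular corrections decouple. -/
theorem correction_reformulation
    {n N : ℕ}
    (D : Fin N → Matrix (Fin n) (Fin n) ℝ)
    (Ss St : Matrix (Fin n) (Fin n) ℝ)
    (ω : Fin N → ℝ)
    (δψ : Fin N → (Fin n → ℝ))
    (ξ v δφ : Fin n → ℝ)
    (hinv : ∀ j, IsUnit (D j + St))
    (hTinv : IsUnit ((1 : Matrix (Fin n) (Fin n) ℝ)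
        - (∑ j, ω j • (D j + St)⁻¹) * Ss))
    (hξ : ((1 : Matrix (Fin n) (Fin n) ℝ)
        - (∑ j, ω j • (D j + St)⁻¹) * Ss).mulVec ξ = v)
    (hδφ : δφ = ∑ j, ω j • δψ j)
    (hδψ : ∀ j, (D j + St).mulVec (δψ j) = Ss.mulVec δφ + Ss.mulVec v) :
    δφ = ((∑ j, ω j • (D j + St)⁻¹) * Ss).mulVec ξ
    ∧ ∀ j, (D j + St).mulVec (δψ j) = Ss.mulVec ξ := by
  set T : Matrix (Fin n) (Fin n) ℝ := ∑ j, ω j • (D j + St)⁻¹ with hT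
  set M : Matrix (Fin n) (Fin n) ℝ := 1 - T * Ss with hM
  -- T applied to the common right-hand side gives δφ
  have hTrhs : T.mulVec (Ss.mulVec δφ) + T.mulVec (Ss.mulVec v) = δφ := by
    rw [← Matrix.mulVec_add, hT, sum_mulVec']
    conv_rhs => rw [hδφ]
    refine Finset.sum_congr rfl fun j _ => ?_
    rw [Matrix.smul_mulVec]
    congr 1
    rw [← hδψ j, Matrix.mulVec_mulVec,
      Matrix.nonsing_inv_mul _ ((Matrix.isUnit_iff_isUnit_det _).mp (hinv j)),
      Matrix.one_mulVec]
  have hMδφ : M.mulVec δφ = (T * Ss).mulVec v := by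
    rw [hM, Matrix.sub_mulVec, Matrix.one_mulVec, sub_eq_iff_eq_add',
      ← Matrix.mulVec_mulVec ,← Matrix.mulVec_mulVec]
    exact hTrhs.symm
  have hcomm : M * (T * Ss) = (T * Ss) * M := by
    rw [hM]; noncomm_ring
  have hδφeq : δφ = (T * Ss).mulVec ξ := by
    have hinjM : Function.Injective M.mulVec :=
      Matrix.mulVec_injective_iff_isUnit.mpr hTinv
    apply hinjM
    rw [hMδφ, ← hξ, Matrix.mulVec_mulVec, Matrix.mulVec_mulVec, hcomm]
  refine ⟨hδφeq, fun j => ?_⟩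
  rw [hδψ j, hδφeq, ← hξ, hM, Matrix.sub_mulVec, Matrix.one_mulVec,
    ← Matrix.mulVec_add]
  have h : (T * Ss).mulVec ξ + (ξ - (T * Ss).mulVec ξ) = ξ := by abel
  rw [h]
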